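/- arXiv:2307.09389 — 2 statements merged into one kernel-verified Lean document; each statement's English description precedes it below -/
import Mathlib

section
/- For any digraph G and any two vertices x,y, either dist_G(x,y) ≤ mw(G) or dist_G(x,y) = ∞, where mw(G) is the modular width of G. -/
open Classical

variable {V : Type*}

/-- There is a directed walk of length `m` from `x` to `y` in the digraph with arc relation `A`. -/
def HasDWalk {V : Type*} (A : V → V → Prop) (x y : V) (m : ℕ) : Prop :=
  ∃ f : Fin (m + 1) → V, f 0 = x ∧ f (Fin.last m) = y ∧
    ∀ i : Fin m, A (f i.castSucc) (f i.succ)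

/-- `y` is reachable from `x` by a directed path. -/
def DReachable {V : Type*} (A : V → V → Prop) (x y : V) : Prop :=
  ∃ m : ℕ, HasDWalk A x y m

/-- Directed distance: length of a shortest directed path, `⊤` if none exists. -/
noncomputable def ddist {V : Type*} (A : V → V → Prop) (x y : V) : ℕ∞ :=
  sInf {n : ℕ∞ | ∃ m : ℕ, n = (m : ℕ∞) ∧ HasDWalk A x y m}

/-- A resolving set: every vertex is reachable from the set, and every pair of
distinct vertices is distinguished by distance from some vertex of the set. -/
def IsResolvingSet {V : Type*} (A : V → V → Prop) (S : Set V) : Prop :=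
  (∀ v : V, ∃ s ∈ S, DReachable A s v) ∧
  ∀ v w : V, v ≠ w → ∃ s ∈ S, ddist A s v ≠ ddist A s w

/-- A modular decomposition of the vertex subset `X` of width at most `t`:
either `X` is a single vertex, or `X` is partitioned into at most `t` modules
of the induced subgraph on `X`, each recursively decomposed. -/
inductive HasMD {V : Type*} (A : V → V → Prop) : Set V → ℕ → Prop
  | single (x : V) (t : ℕ) : HasMD A {x} t
  | step (X : Set V) (t : ℕ) (P : Finset (Set V))
      (hcard : P.card ≤ t)
      (hsub : ∀ Y ∈ P, Y ⊆ X)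
      (hpart : ∀ x ∈ X, ∃! Y, Y ∈ P ∧ x ∈ Y)
      (hmod : ∀ Y ∈ P, ∀ v ∈ X, v ∉ Y → ∀ x ∈ Y, ∀ y ∈ Y,
        (A v x ↔ A v y) ∧ (A x v ↔ A y v))
      (hrec : ∀ Y ∈ P, HasMD A Y t) : HasMD A X t

/-- The modular width: the least width of a modular decomposition of the whole digraph. -/
noncomputable def modularWidth {V : Type*} (A : V → V → Prop) : ℕ :=
  sInf {t : ℕ | HasMD A Set.univ t}

/-!
A shortest walk cannot re-enter a module after leaving it: if `f i` and `f j` (with `i < j`)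
lie in a module `Y` and `f (j + 1)` does not, then the arc `f j → f (j + 1)` is also an arc
`f i → f (j + 1)`, a shortcut; symmetrically for the arc entering `Y` before `f i`. Hence a
shortest walk inside a decomposed set either stays in the part containing its start, where
induction on the decomposition applies, or its vertices after the start lie in pairwise
distinct parts, so its length is at most the number of parts.
-/

section Walks

variable {A : V → V → Prop}

theorem hasDWalk_iff_exists_seq {x y : V} {m : ℕ} :
    HasDWalk A x y m ↔ ∃ f : ℕ → V, f 0 = x ∧ f m = y ∧ ∀ i < m, A (f i) (f (i + 1)) := by
  constructor
  · rintro ⟨f, rfl, rfl, hf⟩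
    refine ⟨fun i => f ⟨min i m, by omega⟩, rfl, by simp [Fin.last], fun i hi => ?_⟩
    convert hf ⟨i, hi⟩ using 2 <;> ext <;> simp <;> omega
  · rintro ⟨f, rfl, rfl, hf⟩
    exact ⟨fun i => f i, rfl, rfl, fun i => hf i i.isLt⟩

theorem ddist_le_of_hasDWalk {x y : V} {m : ℕ} (h : HasDWalk A x y m) : ddist A x y ≤ m :=
  sInf_le ⟨m, rfl, h⟩

theorem exists_hasDWalk_of_ddist_ne_top {x y : V} (h : ddist A x y ≠ ⊤) :
    ∃ m, HasDWalk A x y m := by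
  by_contra! hno
  refine h (sInf_eq_top.2 ?_)
  rintro _ ⟨m, -, hm⟩
  exact absurd hm (hno m)

end Walks

def IsShortestWalk (A : V → V → Prop) (f : ℕ → V) (m : ℕ) : Prop :=
  (∀ i < m, A (f i) (f (i + 1))) ∧ ∀ n < m, ¬ HasDWalk A (f 0) (f m) n

def IsModuleIn (A : V → V → Prop) (X Y : Set V) : Prop :=
  ∀ v ∈ X, v ∉ Y → ∀ x ∈ Y, ∀ y ∈ Y, (A v x ↔ A v y) ∧ (A x v ↔ A y v)

namespace IsShortestWalk

variable {A : V → V → Prop} {f : ℕ → V} {m : ℕ} {X Y : Set V} {i j : ℕ}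

theorem eq_zero_of_eq (hf : IsShortestWalk A f m) (h : f 0 = f m) : m = 0 := by
  by_contra hm
  exact hf.2 0 (Nat.pos_of_ne_zero hm) (hasDWalk_iff_exists_seq.2 ⟨fun _ => f 0, rfl, h, by simp⟩)

theorem le_succ_of_adj (hf : IsShortestWalk A f m) (hjm : j ≤ m)
    (hA : A (f i) (f j)) : j ≤ i + 1 := by
  by_contra! hij
  refine hf.2 (m - (j - i - 1)) (by omega) (hasDWalk_iff_exists_seq.2
    ⟨fun k => if k ≤ i then f k else f (k + (j - i - 1)), by simp, ?_, fun k hk => ?_⟩)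
  · simp only [show ¬ m - (j - i - 1) ≤ i by omega, if_false]
    congr 1
    omega
  · rcases lt_trichotomy k i with hki | rfl | hki
    · simpa [hki.le, show k + 1 ≤ i by omega] using hf.1 k (by omega)
    · simpa [show k + 1 + (j - k - 1) = j by omega] using hA
    · simpa [show ¬ k ≤ i by omega, show ¬ k + 1 ≤ i by omega, add_right_comm k 1]
        using hf.1 (k + (j - i - 1)) (by omega)

theorem mem_of_le_of_mem_of_mem (hf : IsShortestWalk A f m) (hX : ∀ k ≤ m, f k ∈ X)
    (hY : IsModuleIn A X Y) (hij : i < j) (hi : f i ∈ Y) (hj : f j ∈ Y) :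
    ∀ k, j ≤ k → k ≤ m → f k ∈ Y := by
  intro k hjk
  induction k, hjk using Nat.le_induction with
  | base => exact fun _ => hj
  | succ k hjk ih =>
    intro hkm
    by_contra hk
    have hA : A (f i) (f (k + 1)) :=
      ((hY _ (hX _ hkm) hk _ (ih (by omega)) _ hi).2).1 (hf.1 k (by omega))
    have := hf.le_succ_of_adj hkm hA
    omega

theorem mem_of_ge_of_mem_of_mem (hf : IsShortestWalk A f m) (hX : ∀ k ≤ m, f k ∈ X)
    (hY : IsModuleIn A X Y) (hij : i < j) (hjm : j ≤ m) (hi : f i ∈ Y) (hj : f j ∈ Y) :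
    ∀ k ≤ i, f k ∈ Y := by
  intro k hki
  induction hki using Nat.decreasingInduction with
  | self => exact hi
  | of_succ k hki ih =>
    by_contra hk
    have hA : A (f k) (f j) :=
      ((hY _ (hX _ (by omega)) hk _ ih _ hj).1).1 (hf.1 k (by omega))
    have := hf.le_succ_of_adj hjm hA
    omega

theorem forall_mem_of_mem_of_mem (hf : IsShortestWalk A f m) (hX : ∀ k ≤ m, f k ∈ X)
    (hY : IsModuleIn A X Y) (hi₀ : 0 < i) (hij : i < j) (hjm : j ≤ m) (hi : f i ∈ Y)
    (hj : f j ∈ Y) : ∀ k ≤ m, f k ∈ Y := by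
  have hbefore := hf.mem_of_ge_of_mem_of_mem hX hY hij hjm hi hj
  have hafter := hf.mem_of_le_of_mem_of_mem hX hY hi₀ (hbefore 0 (Nat.zero_le _)) hi
  intro k hkm
  rcases le_total k i with hki | hik
  exacts [hbefore k hki, hafter k hik hkm]

end IsShortestWalk

theorem HasMD.length_le_of_isShortestWalk {A : V → V → Prop} {X : Set V} {t : ℕ}
    (h : HasMD A X t) {f : ℕ → V} {m : ℕ} (hf : IsShortestWalk A f m)
    (hX : ∀ k ≤ m, f k ∈ X) : m ≤ t := by
  induction h with
  | single =>
    have := hf.eq_zero_of_eq ((hX 0 (Nat.zero_le _)).trans (hX m le_rfl).symm)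
    omega
  | step _ t P hcard _ hpart hmod _ ih =>
    choose! F hF hFuniq using hpart
    by_cases hstay : ∀ k ≤ m, f k ∈ F (f 0)
    · exact ih _ (hF _ (hX 0 (Nat.zero_le _))).1 hstay
    have hinj : Set.InjOn (fun k => F (f k)) (Finset.Icc 1 m : Set ℕ) := by
      have hne : ∀ i j, 1 ≤ i → i < j → j ≤ m → F (f i) ≠ F (f j) := by
        intro i j hi₀ hij hjm heq
        have hiY := hF _ (hX i (by omega))
        have hall := hf.forall_mem_of_mem_of_mem hX (hmod _ hiY.1) hi₀ hij hjm hiY.2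
          (heq ▸ (hF _ (hX j hjm)).2)
        have h₀ := hFuniq _ (hX 0 (Nat.zero_le _)) _ ⟨hiY.1, hall 0 (Nat.zero_le _)⟩
        exact hstay (h₀ ▸ hall)
      intro i hi j hj heq
      simp only [Finset.coe_Icc, Set.mem_Icc] at hi hj
      rcases lt_trichotomy i j with hij | rfl | hij
      exacts [absurd heq (hne i j hi.1 hij hj.2), rfl, absurd heq.symm (hne j i hj.1 hij hi.2)]
    calc m = (Finset.Icc 1 m).card := by simp
      _ ≤ P.card := Finset.card_le_card_of_injOn _
          (fun k hk => (hF _ (hX k (Finset.mem_Icc.1 hk).2)).1) hinj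
      _ ≤ t := hcard

theorem hasMD_univ_card [Fintype V] (A : V → V → Prop) : HasMD A Set.univ (Fintype.card V) := by
  refine HasMD.step _ _ (Finset.univ.image fun v => ({v} : Set V)) ?_ ?_ ?_ ?_ ?_
  · exact Finset.card_image_le.trans_eq Finset.card_univ
  · simp
  · intro v _
    refine ⟨{v}, by simp, ?_⟩
    simp +contextual
  · simp +contextual
  · simpa using fun v => HasMD.single v _

theorem hasMD_modularWidth [Fintype V] (A : V → V → Prop) :
    HasMD A Set.univ (modularWidth A) :=
  Nat.sInf_mem (s := {t | HasMD A Set.univ t}) ⟨_, hasMD_univ_card A⟩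

/-- every finite directed distance is at most the modular width. -/
theorem dist_le_modularWidth_or_infinite [Fintype V] (A : V → V → Prop) (x y : V) :
    ddist A x y ≤ (modularWidth A : ℕ∞) ∨ ddist A x y = ⊤ := by
  rw [or_iff_not_imp_right]
  intro hfin
  have hex := exists_hasDWalk_of_ddist_ne_top hfin
  obtain ⟨f, hf₀, hfm, hf⟩ := hasDWalk_iff_exists_seq.1 (Nat.find_spec hex)
  have hshort : IsShortestWalk A f (Nat.find hex) :=
    ⟨hf, fun n hn => by rw [hf₀, hfm]; exact Nat.find_min hex hn⟩
  calc ddist A x y ≤ Nat.find hex := ddist_le_of_hasDWalk (Nat.find_spec hex)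
    _ ≤ modularWidth A := by
      exact_mod_cast (hasMD_modularWidth A).length_le_of_isShortestWalk hshort fun _ _ => trivial
end

section
/- Let X be a module of a digraph G, let w₁,w₂ ∈ X, and let x be a vertex with dist_G(w₁,x) ≠ dist_G(w₂,x). Then x ∈ X, and for every vertex y ∉ X, either dist_G(w₁,x) ≠ dist_G(w₁,y) or dist_G(w₂,x) ≠ dist_G(w₂,y). -/
open Classical

variable {V : Type*}

/-- `X` is a module: every vertex outside `X` relates uniformly to all vertices of `X`. -/
def IsModule {V : Type*} (A : V → V → Prop) (X : Set V) : Prop :=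
  ∀ v ∉ X, ∀ x ∈ X, ∀ y ∈ X, (A v x ↔ A v y) ∧ (A x v ↔ A y v)

/-!
A walk from a vertex of a module `X` to a vertex `y` outside `X` can be restarted at any other
vertex `w'` of `X` without getting longer: drop its initial segment up to the first vertex whose
successor lies outside `X`; that successor is then an out-neighbour of `w'` as well. Hence all
vertices of `X` have the same distance to every vertex outside `X`, so a vertex `x` seen at
different distances from `w₁` and `w₂` lies in `X`, and no outside `y` can match both distances
of `x`.
-/

variable {A : V → V → Prop}

theorem hasDWalk_zero_iff {x y : V} : HasDWalk A x y 0 ↔ x = y := by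
  constructor
  · rintro ⟨f, h0, hl, -⟩
    exact h0.symm.trans hl
  · rintro rfl
    exact ⟨fun _ => x, rfl, rfl, Fin.elim0⟩

theorem hasDWalk_succ_iff {x y : V} {m : ℕ} :
    HasDWalk A x y (m + 1) ↔ ∃ z, A x z ∧ HasDWalk A z y m := by
  constructor
  · rintro ⟨f, h0, hl, harc⟩
    refine ⟨f 1, h0 ▸ harc 0, fun j => f j.succ, rfl, by simpa only [Fin.succ_last] using hl,
      fun i => ?_⟩
    simpa only [Fin.succ_castSucc] using harc i.succ
  · rintro ⟨z, hxz, f, h0, hl, harc⟩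
    refine ⟨Fin.cons x f, rfl, by rwa [← Fin.succ_last, Fin.cons_succ], fun i => ?_⟩
    cases i using Fin.cases with
    | zero => simpa [← h0] using hxz
    | succ j => simpa only [← Fin.succ_castSucc, Fin.cons_succ] using harc j

namespace IsModule

variable {X : Set V}

theorem exists_hasDWalk_le (hX : IsModule A X) {w w' y : V} (hw : w ∈ X) (hw' : w' ∈ X)
    (hy : y ∉ X) {m : ℕ} (h : HasDWalk A w y m) : ∃ m' ≤ m, HasDWalk A w' y m' := by
  induction m generalizing w with
  | zero => exact absurd (hasDWalk_zero_iff.mp h ▸ hw) hy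
  | succ m ih =>
    obtain ⟨z, hwz, hzy⟩ := hasDWalk_succ_iff.mp h
    by_cases hz : z ∈ X
    · obtain ⟨m', hm', h'⟩ := ih hz hzy
      exact ⟨m', hm'.trans m.le_succ, h'⟩
    · exact ⟨m + 1, le_rfl, hasDWalk_succ_iff.mpr ⟨z, ((hX z hz w hw w' hw').2).mp hwz, hzy⟩⟩

theorem ddist_le (hX : IsModule A X) {w w' y : V} (hw : w ∈ X) (hw' : w' ∈ X) (hy : y ∉ X) :
    ddist A w' y ≤ ddist A w y := by
  refine le_sInf ?_
  rintro _ ⟨m, rfl, h⟩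
  obtain ⟨m', hm', h'⟩ := hX.exists_hasDWalk_le hw hw' hy h
  exact (ddist_le_of_hasDWalk h').trans (by exact_mod_cast hm')

theorem ddist_eq (hX : IsModule A X) {w w' y : V} (hw : w ∈ X) (hw' : w' ∈ X) (hy : y ∉ X) :
    ddist A w y = ddist A w' y :=
  le_antisymm (hX.ddist_le hw' hw hy) (hX.ddist_le hw hw' hy)

end IsModule

/-- if two vertices of a module have different distances to ,
then  is in the module, and every outside vertex is distinguished from 
by one of the two. -/
theorem module_distinguishing_pair
    (A : V → V → Prop) (X : Set V) (hX : IsModule A X)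
    (w₁ w₂ : V) (hw₁ : w₁ ∈ X) (hw₂ : w₂ ∈ X)
    (x : V) (hx : ddist A w₁ x ≠ ddist A w₂ x) :
    x ∈ X ∧ ∀ y ∉ X, ddist A w₁ x ≠ ddist A w₁ y ∨ ddist A w₂ x ≠ ddist A w₂ y := by
  refine ⟨by_contra fun hxX => hx (hX.ddist_eq hw₁ hw₂ hxX), fun y hy => ?_⟩
  by_contra! h
  exact hx (h.1.trans ((hX.ddist_eq hw₁ hw₂ hy).trans h.2.symm))
end
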